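/- Let K be a field and let q(t,z) ∈ K⟨t,z⟩ be a nonzero polynomial, homogeneous in t and in z separately, with deg_t q ≥ 1. Then the elements z·q(xz−zy, z) and q(xz−zy, z)·z of K⟨x,y,z⟩ are linearly independent over K. -/

import Mathlib

open MonoidAlgebra

noncomputable section

/-- The free associative algebra `K⟨x,y,z⟩`. -/
abbrev FA (K : Type) [Field K] := MonoidAlgebra K (FreeMonoid (Fin 3))

/-- The free associative algebra `K⟨t,z⟩`; `t` is letter `0`, `z` is letter `1`. -/
abbrev FA2 (K : Type) [Field K] := MonoidAlgebra K (FreeMonoid (Fin 2))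

variable (K : Type) [Field K]

/-- The generators `x = Xv 0`, `y = Xv 1`, `z = Xv 2`. -/
def Xv (i : Fin 3) : FA K := MonoidAlgebra.of K (FreeMonoid (Fin 3)) (FreeMonoid.of i)

/-- The substitution homomorphism `K⟨t,z⟩ → K⟨x,y,z⟩` sending `t ↦ f 0`, `z ↦ f 1`. -/
def subst2 (f : Fin 2 → FA K) : FA2 K →ₐ[K] FA K :=
  MonoidAlgebra.lift K (FA K) (FreeMonoid (Fin 2)) (FreeMonoid.lift f)

/-- `q(xz - zy, z)`: the image of `q(t,z)` under `t ↦ xz − zy`, `z ↦ z`. -/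
def qSub (q : FA2 K) : FA K :=
  subst2 K ![Xv K 0 * Xv K 2 - Xv K 2 * Xv K 1, Xv K 2] q

/-! Setting `y = 0` sends `q(xz − zy, z)` to `P = q(xz, z)`, which is nonzero because the word
substitution `t ↦ xz`, `z ↦ z` is injective, and all of whose words contain `x`; so it suffices
that `zP` and `Pz` are independent. If `s • zP + t • Pz = 0`, take a word `w` of `P` with the
longest initial run of `z`'s. Then `zw` is not `vz` for any word `v` of `P`, as `v` would have a
longer run, so the coefficient of `zw` gives `s = 0`, and then `t = 0`. -/

section

variable {α : Type*}

theorem FreeMonoid.exists_forall_of_mul_ne_mul_of (c : α) (S : Finset (FreeMonoid α))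
    (hS : S.Nonempty) (hc : ∀ w ∈ S, ∃ a ∈ w, a ≠ c) :
    ∃ w ∈ S, ∀ v ∈ S, FreeMonoid.of c * w ≠ v * FreeMonoid.of c := by
  classical
  let lead : FreeMonoid α → ℕ := fun w => w.toList.findIdx (· ≠ c)
  obtain ⟨w, hwS, hmax⟩ := S.exists_max_image lead hS
  refine ⟨w, hwS, fun v hvS hvw => ?_⟩
  have : lead v = lead w + 1 := by
    have := congrArg lead hvw
    have hv : ∃ a ∈ v.toList, a ≠ c := hc v hvS
    simpa [lead, List.findIdx_append, List.findIdx_cons, hv] using this.symm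
  exact absurd (hmax v hvS) (by omega)

theorem MonoidAlgebra.linearIndependent_single_mul_mul_single {R : Type*} [Ring R]
    [NoZeroDivisors R] (c : α) {P : MonoidAlgebra R (FreeMonoid α)} (hP : P ≠ 0)
    (hc : ∀ w ∈ P.coeff.support, ∃ a ∈ w, a ≠ c) :
    LinearIndependent R ![single (FreeMonoid.of c) 1 * P, P * single (FreeMonoid.of c) 1] := by
  obtain ⟨w, hwS, hw⟩ := FreeMonoid.exists_forall_of_mul_ne_mul_of c P.coeff.support
    (Finsupp.support_nonempty_iff.2 fun h => hP (coeff_eq_zero.1 h)) hc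
  have hPw : P.coeff w ≠ 0 := Finsupp.mem_support_iff.1 hwS
  rw [LinearIndependent.pair_iff]
  intro s t hst
  have hs : s = 0 := by
    have hPc : (P * single (FreeMonoid.of c) 1).coeff (FreeMonoid.of c * w) = 0 := by
      by_cases hcw : ∃ v, v * FreeMonoid.of c = FreeMonoid.of c * w
      · obtain ⟨v, hv⟩ := hcw
        rw [coeff_mul_single_eq_coeff_mul v fun u _ => by rw [← hv, mul_left_inj],
          Finsupp.notMem_support_iff.1 fun hvS => hw v hvS hv.symm, zero_mul]
      · exact coeff_mul_single_of_forall_mul_ne _ _ fun v h => hcw ⟨v, h⟩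
    have := congrArg (fun g : MonoidAlgebra R (FreeMonoid α) => g.coeff (FreeMonoid.of c * w)) hst
    simpa [coeff_single_mul_mul, hPc, hPw] using this
  subst hs
  have := congrArg (fun g : MonoidAlgebra R (FreeMonoid α) => g.coeff (w * FreeMonoid.of c)) hst
  simpa [coeff_mul_single_mul, hPw] using this

end

def substXZ : FreeMonoid (Fin 2) →* FreeMonoid (Fin 3) :=
  FreeMonoid.lift ![FreeMonoid.of 0 * FreeMonoid.of 2, FreeMonoid.of 2]

theorem substXZ_injective : Function.Injective substXZ := by
  intro u
  induction u using FreeMonoid.inductionOn' with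
  | one =>
    intro v h
    cases v using FreeMonoid.casesOn with
    | one => rfl
    | of_mul b v => fin_cases b <;> simpa [substXZ] using congrArg FreeMonoid.toList h
  | of_mul a u ih =>
    intro v h
    cases v using FreeMonoid.casesOn with
    | one => fin_cases a <;> simpa [substXZ] using congrArg FreeMonoid.toList h
    | of_mul b v =>
      obtain rfl : a = b := by
        fin_cases a <;> fin_cases b <;>
          first | rfl | simpa [substXZ] using congrArg FreeMonoid.toList h
      rw [map_mul, map_mul, mul_right_inj] at h
      rw [ih h]

theorem zero_mem_substXZ {u : FreeMonoid (Fin 2)} (hu : 0 ∈ u) : 0 ∈ substXZ u := by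
  induction u using FreeMonoid.inductionOn' with
  | one => exact absurd hu FreeMonoid.notMem_one
  | of_mul a u ih =>
    rw [map_mul, FreeMonoid.mem_mul]
    rcases FreeMonoid.mem_mul.1 hu with ha | hu
    · obtain rfl := FreeMonoid.mem_of.1 ha
      simp [substXZ, FreeMonoid.mem_mul]
    · exact .inr (ih hu)

def yToZero : FA K →ₐ[K] FA K :=
  MonoidAlgebra.lift K (FA K) (FreeMonoid (Fin 3)) (FreeMonoid.lift ![Xv K 0, 0, Xv K 2])

theorem yToZero_comp_subst2 :
    (yToZero K).comp (subst2 K ![Xv K 0 * Xv K 2 - Xv K 2 * Xv K 1, Xv K 2]) =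
      MonoidAlgebra.mapDomainAlgHom K K substXZ := by
  refine MonoidAlgebra.algHom_ext (fun w => ?_) (by ext)
  induction w using FreeMonoid.inductionOn' with
  | one => simp [← one_def]
  | of_mul a w ih =>
    rw [← mul_one (1 : K), ← single_mul_single, map_mul, map_mul, ih]
    fin_cases a <;> simp [yToZero, subst2, Xv, substXZ]

/-- If `q(t,z) ∈ K⟨t,z⟩` is nonzero, homogeneous in `t` and in `z` separately, with
`deg_t q ≥ 1`, then `z·q(xz−zy,z)` and `q(xz−zy,z)·z` are linearly independent over `K`. -/
theorem linearIndependent_zq_qz (q : FA2 K) (hq : q ≠ 0) (m e : ℕ) (hm : 1 ≤ m)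
    (hhom : ∀ w ∈ q.coeff.support, (FreeMonoid.toList w).count 0 = m ∧
      (FreeMonoid.toList w).count 1 = e) :
    LinearIndependent K ![Xv K 2 * qSub K q, qSub K q * Xv K 2] := by
  classical
  set P := MonoidAlgebra.mapDomain substXZ q
  have hP : P ≠ 0 := by
    simpa [P] using (MonoidAlgebra.mapDomain_injective substXZ_injective).ne hq
  have hx : ∀ w ∈ P.coeff.support, ∃ a ∈ w, a ≠ 2 := by
    intro w hw
    obtain ⟨u, hu, rfl⟩ := Finset.mem_image.1 (Finsupp.mapDomain_support hw)
    have hu0 : 0 < u.toList.count 0 := (hhom u hu).1 ▸ hm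
    exact ⟨0, zero_mem_substXZ (List.count_pos_iff.1 hu0), by decide⟩
  have hz : yToZero K (Xv K 2) = single (FreeMonoid.of 2) 1 := by simp [yToZero, Xv]
  have hqP : yToZero K (qSub K q) = P := by
    rw [qSub, ← AlgHom.comp_apply, yToZero_comp_subst2, mapDomainAlgHom_apply]
  have himage : (yToZero K).toLinearMap ∘ ![Xv K 2 * qSub K q, qSub K q * Xv K 2] =
      ![single (FreeMonoid.of 2) 1 * P, P * single (FreeMonoid.of 2) 1] := by
    ext i : 1
    fin_cases i <;> simp [hz, hqP]
  refine .of_comp (yToZero K).toLinearMap ?_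
  rw [himage]
  exact linearIndependent_single_mul_mul_single 2 hP hx
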